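/- arXiv:1407.7680 — 3 statements merged into one kernel-verified Lean document; each statement's English description precedes it below -/
import Mathlib

section
/- Let W₁, …, W_N be k-dimensional subspaces of ℝᵈ with orthogonal projections P₁, …, P_N, and let λ = max_{i≠j} ‖PᵢPⱼ‖ (operator norm). Then λ² ≥ (kN − d)/(dN − d), provided N ≥ 2. -/
/-!
Let `Q = ∑ⱼ Pⱼ`. Then `tr Q = kN`, and `tr Q² = ∑ᵢⱼ tr (Pᵢ Pⱼ)`, where the diagonal terms equal
`k` and, computing `tr (Pᵢ Pⱼ) = ∑ₘ ‖Pᵢ bₘ‖²` in an orthonormal basis `(bₘ)` of `Wⱼ`, each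
off-diagonal term is at most `k λ²`. Since `Q` is self-adjoint, Cauchy–Schwarz in an orthonormal
basis of ℝᵈ gives `(tr Q)² ≤ d tr Q²`, i.e. `(kN)² ≤ d (Nk + N(N - 1) k λ²)`, which rearranges to
the bound.
-/

open scoped RealInnerProductSpace
open Module LinearMap

theorem Finset.sum_sum_le_of_diag_le_of_offDiag_le {ι : Type*} [Fintype ι] [DecidableEq ι]
    (f : ι → ι → ℝ) {a c : ℝ} (hdiag : ∀ i, f i i ≤ a) (hoff : ∀ i j, i ≠ j → f i j ≤ c) :
    ∑ i, ∑ j, f i j ≤ Fintype.card ι * a + Fintype.card ι * (Fintype.card ι - 1 : ℝ) * c := by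
  calc ∑ i, ∑ j, f i j ≤ ∑ i : ι, ∑ j : ι, (c + if i = j then a - c else 0) := by
        gcongr with i _ j _
        split_ifs with hij
        · subst hij; linarith [hdiag i]
        · linarith [hoff i j hij]
    _ = _ := by
        simp [Finset.sum_add_distrib]
        ring

section
variable {E : Type*} [NormedAddCommGroup E] [InnerProductSpace ℝ E] [FiniteDimensional ℝ E]

theorem trace_comp_starProjection {ι : Type*} [Fintype ι] (K : Submodule ℝ E)
    (b : OrthonormalBasis ι ℝ K) (A : E →ₗ[ℝ] E) :
    trace ℝ E (A ∘ₗ K.starProjection) = ∑ i, ⟪(b i : E), A (b i)⟫ := by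
  rw [Submodule.starProjection, ContinuousLinearMap.toLinearMap_comp, ← comp_assoc,
    trace_comp_comm', trace_eq_sum_inner _ b]
  simp

theorem trace_starProjection (K : Submodule ℝ E) :
    trace ℝ E K.starProjection = finrank ℝ K := by
  rw [← id_comp (K.starProjection : E →ₗ[ℝ] E),
    trace_comp_starProjection K (stdOrthonormalBasis ℝ K)]
  simp [Submodule.norm_coe]

theorem trace_starProjection_comp_starProjection_le (K L : Submodule ℝ E) {c : ℝ}
    (h : ‖K.starProjection ∘L L.starProjection‖ ≤ c) :
    trace ℝ E (K.starProjection ∘L L.starProjection) ≤ finrank ℝ L * c ^ 2 := by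
  let b := stdOrthonormalBasis ℝ L
  have hb (i) : ⟪(b i : E), K.starProjection (b i)⟫ ≤ c ^ 2 := by
    have hnorm : ‖K.starProjection (b i)‖ ≤ c := by
      calc ‖K.starProjection (b i)‖ = ‖(K.starProjection ∘L L.starProjection) (b i)‖ := by
            simp
        _ ≤ ‖K.starProjection ∘L L.starProjection‖ * ‖(b i : E)‖ :=
            ContinuousLinearMap.le_opNorm _ _
        _ ≤ c := by simpa [Submodule.norm_coe, b.norm_eq_one] using h
    have hsq : ⟪(b i : E), K.starProjection (b i)⟫ = ‖K.starProjection (b i)‖ ^ 2 := by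
      rw [← real_inner_self_eq_norm_sq, K.inner_starProjection_left_eq_right,
        K.starProjection_eq_self_iff.mpr (K.starProjection_apply_mem _)]
    rw [hsq]
    exact pow_le_pow_left₀ (norm_nonneg _) hnorm 2
  calc trace ℝ E (K.starProjection ∘L L.starProjection)
      = ∑ i, ⟪(b i : E), K.starProjection (b i)⟫ := trace_comp_starProjection L b _
    _ ≤ ∑ _i, c ^ 2 := Finset.sum_le_sum fun i _ => hb i
    _ = finrank ℝ L * c ^ 2 := by simp

theorem LinearMap.IsSymmetric.trace_sq_le {T : E →ₗ[ℝ] E} (hT : T.IsSymmetric) :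
    trace ℝ E T ^ 2 ≤ finrank ℝ E * trace ℝ E (T ∘ₗ T) := by
  let e := stdOrthonormalBasis ℝ E
  have hdiag (i) : |⟪e i, T (e i)⟫| ≤ ‖T (e i)‖ := by
    simpa [e.norm_eq_one] using abs_real_inner_le_norm (e i) (T (e i))
  calc trace ℝ E T ^ 2 = |∑ i, ⟪e i, T (e i)⟫| ^ 2 := by rw [trace_eq_sum_inner T e, sq_abs]
    _ ≤ (∑ i, ‖T (e i)‖) ^ 2 := by
        gcongr
        exact (Finset.abs_sum_le_sum_abs _ _).trans (Finset.sum_le_sum fun i _ => hdiag i)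
    _ ≤ Fintype.card (Fin (finrank ℝ E)) * ∑ i, ‖T (e i)‖ ^ 2 := sq_sum_le_card_mul_sum_sq
    _ = finrank ℝ E * trace ℝ E (T ∘ₗ T) := by
        simp only [trace_eq_sum_inner (T ∘ₗ T) e, comp_apply, ← hT _ (T _),
          real_inner_self_eq_norm_sq]
        simp

end

theorem coherence_bound_of_trace_ineq {d k N lam : ℝ} (hd : 0 ≤ d) (hN : 2 ≤ N)
    (h : (k * N) ^ 2 ≤ d * (N * k + N * (N - 1) * (k * lam ^ 2))) :
    (k * N - d) / (d * N - d) ≤ lam ^ 2 := by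
  rcases le_or_gt (k * N) d with hkN | hkN
  · exact (div_nonpos_of_nonpos_of_nonneg (by linarith) (by nlinarith)).trans (sq_nonneg lam)
  · have hd' : 0 < d := hd.lt_of_ne (by rintro rfl; nlinarith)
    rw [div_le_iff₀ (by nlinarith)]
    nlinarith

theorem stmt_5_general (d k N : ℕ) (hN : 2 ≤ N)
    (W : Fin N → Submodule ℝ (EuclideanSpace ℝ (Fin d)))
    (hk : ∀ j, Module.finrank ℝ (W j) = k)
    (P : Fin N → (EuclideanSpace ℝ (Fin d) →L[ℝ] EuclideanSpace ℝ (Fin d)))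
    (hP : ∀ j, P j = (W j).subtypeL.comp (Submodule.orthogonalProjection (W j)))
    (lam : ℝ) (hlam : ∀ i j, i ≠ j → ‖(P i).comp (P j)‖ ≤ lam) :
    ((k : ℝ) * N - d) / ((d : ℝ) * N - d) ≤ lam ^ 2 := by
  obtain rfl : P = fun j => (W j).starProjection := funext hP
  set Q := ∑ j, (W j).starProjection
  have htrace : trace ℝ (EuclideanSpace ℝ (Fin d)) Q = k * N := by
    simp [Q, map_sum, trace_starProjection, hk, mul_comm]
  have hdiag (i : Fin N) :
      trace ℝ (EuclideanSpace ℝ (Fin d)) ((W i).starProjection ∘L (W i).starProjection) = k := by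
    rw [← ContinuousLinearMap.mul_def, (W i).isIdempotentElem_starProjection.eq,
      trace_starProjection, hk]
  have hoff (i j : Fin N) (hij : i ≠ j) :
      trace ℝ (EuclideanSpace ℝ (Fin d)) ((W i).starProjection ∘L (W j).starProjection)
        ≤ k * lam ^ 2 :=
    hk j ▸ trace_starProjection_comp_starProjection_le _ _ (hlam i j hij)
  have htrace_sq :
      trace ℝ (EuclideanSpace ℝ (Fin d)) (Q ∘L Q) ≤ N * k + N * (N - 1) * (k * lam ^ 2) := by
    rw [← ContinuousLinearMap.mul_def, Finset.sum_mul_sum]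
    simp only [ContinuousLinearMap.toLinearMap_sum, map_sum]
    exact (Finset.sum_sum_le_of_diag_le_of_offDiag_le _ (fun i => (hdiag i).le) hoff).trans_eq
      (by simp)
  have hQ : (Q : EuclideanSpace ℝ (Fin d) →ₗ[ℝ] EuclideanSpace ℝ (Fin d)).IsSymmetric := by
    simpa [Q] using isSymmetric_sum _ fun j _ => (W j).starProjection_isSymmetric
  have hCS := hQ.trace_sq_le
  rw [finrank_euclideanSpace_fin, htrace] at hCS
  exact coherence_bound_of_trace_ineq d.cast_nonneg (by exact_mod_cast hN)
    (hCS.trans (by gcongr; exact htrace_sq))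

/-- Lower bound on the coherence parameter: if `W₁, …, W_N` are `k`-dimensional
subspaces of ℝᵈ with orthogonal projections `Pⱼ`, and `λ` bounds `‖Pᵢ Pⱼ‖` for all
`i ≠ j` (in particular if `λ = max_{i≠j} ‖Pᵢ Pⱼ‖`), then
`λ² ≥ (kN − d)/(dN − d)` whenever `N ≥ 2`. -/
theorem stmt_5 (d k N : ℕ) (hd : 0 < d) (hN : 2 ≤ N)
    (W : Fin N → Submodule ℝ (EuclideanSpace ℝ (Fin d)))
    (hk : ∀ j, Module.finrank ℝ (W j) = k)
    (P : Fin N → (EuclideanSpace ℝ (Fin d) →L[ℝ] EuclideanSpace ℝ (Fin d)))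
    (hP : ∀ j, P j = (W j).subtypeL.comp (Submodule.orthogonalProjection (W j)))
    (lam : ℝ) (hlam : ∀ i j, i ≠ j → ‖(P i).comp (P j)‖ ≤ lam) :
    ((k : ℝ) * N - d) / ((d : ℝ) * N - d) ≤ lam ^ 2 :=
  stmt_5_general d k N hN W hk P hP lam hlam
end

section
/- Let A ∈ ℝ^{m×N} and let A_I = A ⊗ I_d be the Kronecker product with the d×d identity. If A satisfies (1−δ)‖u‖₂² ≤ ‖Au‖₂² ≤ (1+δ)‖u‖₂² for all s-sparse u ∈ ℝᴺ, then for every collection of subspaces W₁,…,W_N ⊂ ℝᵈ and every block s-sparse x = (x₁,…,x_N) with xⱼ ∈ Wⱼ, one has (1−δ)‖x‖₂² ≤ ‖A_I x‖₂² ≤ (1+δ)‖x‖₂². -/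
/-!
Apply the scalar restricted isometry property to each coordinate slice `(xⱼ k)ⱼ` of the block
vector: it is `s`-sparse because its support lies in the block support of `x`, and `A` acts on it
as `A_I` acts on the `k`-th coordinates. Summing the `d` scalar inequalities over `k` gives the
block inequalities, since both `∑ⱼ ‖xⱼ‖²` and `∑ᵢ ‖(A_I x)ᵢ‖²` split as sums over coordinates.
-/

open Finset

section BlockVectors

variable {m n ι : Type*} [Fintype n]

theorem EuclideanSpace.sum_smul_apply (c : n → ℝ) (x : n → EuclideanSpace ℝ ι) (k : ι) :
    (∑ j, c j • x j) k = ∑ j, c j * x j k := by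
  rw [WithLp.ofLp_sum, Finset.sum_apply]
  rfl

theorem ncard_apply_ne_zero_le (x : n → EuclideanSpace ℝ ι) (k : ι) :
    {j | x j k ≠ 0}.ncard ≤ {j | x j ≠ 0}.ncard :=
  Set.ncard_le_ncard (fun j hj hx => hj (by rw [hx]; rfl)) (Set.toFinite _)

variable [Fintype m] [Fintype ι]

theorem EuclideanSpace.sum_norm_sq_eq_sum_sum_sq (x : n → EuclideanSpace ℝ ι) :
    ∑ j, ‖x j‖ ^ 2 = ∑ k, ∑ j, x j k ^ 2 := by
  rw [sum_comm]
  exact sum_congr rfl fun j _ => EuclideanSpace.real_norm_sq_eq (x j)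

theorem Matrix.sum_norm_sq_sum_smul_eq_sum_sum_sq (A : Matrix m n ℝ)
    (x : n → EuclideanSpace ℝ ι) :
    ∑ i, ‖∑ j, A i j • x j‖ ^ 2 = ∑ k, ∑ i, (∑ j, A i j * x j k) ^ 2 := by
  rw [EuclideanSpace.sum_norm_sq_eq_sum_sum_sq]
  simp only [EuclideanSpace.sum_smul_apply]

end BlockVectors

theorem stmt_10_general (m N d s : ℕ) (A : Matrix (Fin m) (Fin N) ℝ) (δ : ℝ)
    (hRIP : ∀ u : Fin N → ℝ, {j | u j ≠ 0}.ncard ≤ s →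
      (1 - δ) * ∑ j, (u j) ^ 2 ≤ ∑ i, (∑ j, A i j * u j) ^ 2 ∧
      ∑ i, (∑ j, A i j * u j) ^ 2 ≤ (1 + δ) * ∑ j, (u j) ^ 2)
    (x : Fin N → EuclideanSpace ℝ (Fin d))
    (hxs : {j | x j ≠ 0}.ncard ≤ s) :
    (1 - δ) * ∑ j, ‖x j‖ ^ 2 ≤ ∑ i, ‖∑ j, A i j • x j‖ ^ 2 ∧
    ∑ i, ‖∑ j, A i j • x j‖ ^ 2 ≤ (1 + δ) * ∑ j, ‖x j‖ ^ 2 := by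
  have hslice k := hRIP (fun j => x j k) ((ncard_apply_ne_zero_le x k).trans hxs)
  rw [EuclideanSpace.sum_norm_sq_eq_sum_sum_sq, A.sum_norm_sq_sum_smul_eq_sum_sum_sq, mul_sum,
    mul_sum]
  exact ⟨sum_le_sum fun k _ => (hslice k).1, sum_le_sum fun k _ => (hslice k).2⟩

/-- The classical restricted isometry constant of `A` dominates the fusion restricted
isometry constant of `A_I = A ⊗ I_d`: if `(1−δ)‖u‖² ≤ ‖Au‖² ≤ (1+δ)‖u‖²` for all
`s`-sparse `u ∈ ℝᴺ`, then for any subspaces `W₁, …, W_N ⊆ ℝᵈ` and any block `s`-sparse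
`x` with `xⱼ ∈ Wⱼ`, `(1−δ)‖x‖² ≤ ‖A_I x‖² ≤ (1+δ)‖x‖²`, where
`(A_I x)ᵢ = ∑_j A i j • xⱼ`. -/
theorem stmt_10 (m N d s : ℕ) (A : Matrix (Fin m) (Fin N) ℝ) (δ : ℝ)
    (hRIP : ∀ u : Fin N → ℝ, {j | u j ≠ 0}.ncard ≤ s →
      (1 - δ) * ∑ j, (u j) ^ 2 ≤ ∑ i, (∑ j, A i j * u j) ^ 2 ∧
      ∑ i, (∑ j, A i j * u j) ^ 2 ≤ (1 + δ) * ∑ j, (u j) ^ 2)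
    (W : Fin N → Submodule ℝ (EuclideanSpace ℝ (Fin d)))
    (x : Fin N → EuclideanSpace ℝ (Fin d)) (hxW : ∀ j, x j ∈ W j)
    (hxs : {j | x j ≠ 0}.ncard ≤ s) :
    (1 - δ) * ∑ j, ‖x j‖ ^ 2 ≤ ∑ i, ‖∑ j, A i j • x j‖ ^ 2 ∧
    ∑ i, ‖∑ j, A i j • x j‖ ^ 2 ≤ (1 + δ) * ∑ j, ‖x j‖ ^ 2 :=
  stmt_10_general m N d s A δ hRIP x hxs
end

section
/- Let Φ ∈ ℝ^{m'×dN} be a matrix whose restricted isometry constant θ_{2s} on the set of 2s-block-sparse vectors in ℋ satisfies θ_{2s} < √2 − 1. Then every s-block-sparse x ∈ ℋ is the unique minimizer of min_{z∈ℋ} ‖z‖_{2,1} subject to Φz = Φx. -/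
/-!
Let `h = z - x ∈ ker Φ` and let `T` be the support of `x`. If `‖z‖_{2,1} ≤ ‖x‖_{2,1}`, then
`h` lies in the cone `‖h_{Tᶜ}‖_{2,1} ≤ ‖h_T‖_{2,1}`. Order the blocks of `Tᶜ` by decreasing
`‖h_j‖` and cut them into consecutive groups `T₁, T₂, …` of `s` blocks. Each `‖h_j‖` with
`j ∈ T_{i+1}` is at most the average of `‖h_k‖` over `T_i`, so
`∑_{i ≥ 2} ‖h_{T_i}‖₂ ≤ s^{-1/2} ‖h_{Tᶜ}‖_{2,1} ≤ s^{-1/2} ‖h_T‖_{2,1} ≤ ‖h_T‖₂`.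
For `u = h_T + h_{T₁}` we have `Φu = -∑_{i ≥ 2} Φ h_{T_i}`, and the RIP makes `Φ` nearly
orthogonal on disjointly supported `2s`-sparse pieces, so
`(1 - θ)‖u‖₂² ≤ ‖Φu‖² ≤ θ (‖h_T‖₂ + ‖h_{T₁}‖₂) ‖h_T‖₂ ≤ √2 θ ‖u‖₂²`.
When `θ < √2 - 1` this forces `u = 0`, hence `h_T = 0`, and then the cone condition gives `h = 0`.
-/

open Finset
open Function (support)
open scoped InnerProductSpace

section SortedBlocks

variable {ι : Type*}

theorem Finset.exists_subset_card_eq_forall_le [DecidableEq ι] (a : ι → ℝ) (S : Finset ι)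
    {n : ℕ} (hn : n ≤ #S) : ∃ B ⊆ S, #B = n ∧ ∀ j ∈ B, ∀ k ∈ S \ B, a k ≤ a j := by
  induction n with
  | zero => exact ⟨∅, empty_subset S, card_empty, by simp⟩
  | succ n ih =>
    obtain ⟨B, hBS, hBn, hB⟩ := ih (by omega)
    have hne : (S \ B).Nonempty := by
      rw [← card_pos, card_sdiff_of_subset hBS]; omega
    obtain ⟨m, hm, hmax⟩ := exists_max_image (S \ B) a hne
    have hmB : m ∉ B := (mem_sdiff.1 hm).2
    refine ⟨insert m B, insert_subset (mem_sdiff.1 hm).1 hBS,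
      by rw [card_insert_of_notMem hmB, hBn], fun j hj k hk => ?_⟩
    have hkB : k ∈ S \ B := by grind
    rcases mem_insert.1 hj with rfl | hjB
    · exact hmax k hkB
    · exact hB j hjB k hkB

theorem sqrt_card_mul_sqrt_sum_sq_le_sum {a : ι → ℝ} (ha : ∀ j, 0 ≤ a j) {A B : Finset ι}
    (hBA : #B ≤ #A) (hdom : ∀ j ∈ A, ∀ k ∈ B, a k ≤ a j) :
    √(#A : ℝ) * √(∑ k ∈ B, a k ^ 2) ≤ ∑ j ∈ A, a j := by
  rcases A.eq_empty_or_nonempty with rfl | hA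
  · simp
  have hA0 : (0 : ℝ) < #A := by exact_mod_cast hA.card_pos
  have hsum : ∀ k ∈ B, #A * a k ≤ ∑ j ∈ A, a j := fun k hk => by
    simpa using card_nsmul_le_sum A a (a k) fun j hj => hdom j hj k hk
  have key : #A * (#A * ∑ k ∈ B, a k ^ 2) ≤ #A * (∑ j ∈ A, a j) ^ 2 :=
    calc #A * (#A * ∑ k ∈ B, a k ^ 2) = ∑ k ∈ B, (#A * a k) ^ 2 := by
          rw [mul_sum, mul_sum]; exact sum_congr rfl fun k _ => by ring
      _ ≤ ∑ k ∈ B, (∑ j ∈ A, a j) ^ 2 := sum_le_sum fun k hk =>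
          pow_le_pow_left₀ (mul_nonneg hA0.le (ha k)) (hsum k hk) 2
      _ = #B * (∑ j ∈ A, a j) ^ 2 := by rw [sum_const, nsmul_eq_mul]
      _ ≤ #A * (∑ j ∈ A, a j) ^ 2 := by gcongr
  rw [← Real.sqrt_mul hA0.le, ← Real.sqrt_sq (sum_nonneg fun j _ => ha j)]
  exact Real.sqrt_le_sqrt (le_of_mul_le_mul_left key hA0)

theorem Finpartition.sum_extendOfLE_le [DecidableEq ι] {S S' : Finset ι} (P : Finpartition S)
    (h : S ≤ S') {f : Finset ι → ℝ} (hf : ∀ B, 0 ≤ f B) :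
    ∑ B ∈ (P.extendOfLE h).parts, f B ≤ f (S' \ S) + ∑ B ∈ P.parts, f B := by
  have hsub : (P.extendOfLE h).parts ⊆ insert (S' \ S) P.parts := fun B hB =>
    mem_insert.2 (P.mem_parts_or_eq_sdiff_of_mem_extendOfLE h hB).symm
  refine (sum_le_sum_of_subset_of_nonneg hsub fun B _ _ => hf B).trans ?_
  by_cases hmem : S' \ S ∈ P.parts
  · rw [insert_eq_of_mem hmem]; linarith [hf (S' \ S)]
  · rw [sum_insert hmem]

theorem exists_finpartition_sqrt_mul_sum_le [DecidableEq ι] (a : ι → ℝ) (ha : ∀ j, 0 ≤ a j)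
    {s : ℕ} (hs : 0 < s) (S : Finset ι) :
    ∃ T ⊆ S, #T ≤ s ∧ ∃ P : Finpartition (S \ T), (∀ B ∈ P.parts, #B ≤ s) ∧
      √(s : ℝ) * ∑ B ∈ P.parts, √(∑ j ∈ B, a j ^ 2) ≤ ∑ j ∈ S, a j := by
  induction S using Finset.strongInduction with
  | H S ih =>
  by_cases hS : #S ≤ s
  · refine ⟨S, subset_rfl, hS, (Finpartition.empty _).copy sdiff_self.symm, by simp, ?_⟩
    simpa using sum_nonneg fun j _ => ha j
  -- `A` holds the `s` largest entries; the first block `T` of the rest is dominated by it.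
  obtain ⟨A, hAS, hAs, hdom⟩ := S.exists_subset_card_eq_forall_le a (n := s) (by omega)
  obtain ⟨T, hT, hTs, P, hPs, hP⟩ := ih (S \ A) (sdiff_ssubset hAS (card_pos.1 (by omega)))
  refine ⟨A, hAS, hAs.le, P.extendOfLE sdiff_le, fun B hB => ?_, ?_⟩
  · rcases P.mem_parts_or_eq_sdiff_of_mem_extendOfLE _ hB with hB | rfl
    · exact hPs B hB
    · rwa [Finset.sdiff_sdiff_eq_self hT]
  have hTA : √(s : ℝ) * √(∑ j ∈ T, a j ^ 2) ≤ ∑ j ∈ A, a j := by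
    rw [← hAs]
    exact sqrt_card_mul_sqrt_sum_sq_le_sum ha (hAs ▸ hTs) fun j hj k hk => hdom j hj k (hT hk)
  calc √(s : ℝ) * ∑ B ∈ (P.extendOfLE sdiff_le).parts, √(∑ j ∈ B, a j ^ 2)
      ≤ √(s : ℝ) * (√(∑ j ∈ T, a j ^ 2) + ∑ B ∈ P.parts, √(∑ j ∈ B, a j ^ 2)) := by
        gcongr
        simpa only [Finset.sdiff_sdiff_eq_self hT] using
          P.sum_extendOfLE_le sdiff_le fun B => Real.sqrt_nonneg (∑ j ∈ B, a j ^ 2)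
    _ ≤ ∑ j ∈ A, a j + ∑ j ∈ S \ A, a j := by rw [mul_add]; exact add_le_add hTA hP
    _ = ∑ j ∈ S, a j := by rw [add_comm, sum_sdiff hAS]

theorem sum_le_sqrt_card_mul_sqrt_sum_sq {a : ι → ℝ} (T : Finset ι) :
    ∑ j ∈ T, a j ≤ √(#T : ℝ) * √(∑ j ∈ T, a j ^ 2) := by
  rw [← Real.sqrt_mul (Nat.cast_nonneg _)]
  exact Real.le_sqrt_of_sq_le sq_sum_le_card_mul_sum_sq

end SortedBlocks

theorem eq_zero_of_one_sub_mul_sq_add_sq_le {a b c θ : ℝ} (ha : 0 ≤ a) (hb : 0 ≤ b)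
    (hθ0 : 0 ≤ θ) (hθ : θ < √2 - 1) (hca : c ≤ a)
    (h : (1 - θ) * (a ^ 2 + b ^ 2) ≤ θ * (a + b) * c) : a = 0 := by
  have hr : √2 * √2 = 2 := Real.mul_self_sqrt zero_le_two
  have hr1 : 1 < √2 := by rw [Real.lt_sqrt zero_le_one]; norm_num
  -- sum-of-squares certificate, using `(√2 - 1)(√2 + 1) = 1`
  have hmix : (a + b) * a ≤ √2 * (a ^ 2 + b ^ 2) := by
    nlinarith [mul_nonneg (sub_nonneg.2 hr1.le) (sq_nonneg (a - (√2 + 1) * b / 2)),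
      mul_nonneg (by linarith : (0 : ℝ) ≤ 3 * √2 - 1) (sq_nonneg b)]
  have hM : (1 - (1 + √2) * θ) * (a ^ 2 + b ^ 2) ≤ 0 := by
    nlinarith [mul_le_mul_of_nonneg_left hca (mul_nonneg hθ0 (add_nonneg ha hb))]
  have hpos : 0 < 1 - (1 + √2) * θ := by nlinarith
  nlinarith [nonpos_of_mul_nonpos_right hM hpos]

section BlockVectors

variable {ι E : Type*} [Fintype ι] [NormedAddCommGroup E]

theorem sum_norm_sq_eq_zero_iff {u : ι → E} : ∑ j, ‖u j‖ ^ 2 = 0 ↔ u = 0 := by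
  simp [sum_eq_zero_iff_of_nonneg, funext_iff]

theorem sum_norm_smul_sq [NormedSpace ℝ E] (c : ℝ) (u : ι → E) :
    ∑ j, ‖(c • u) j‖ ^ 2 = c ^ 2 * ∑ j, ‖u j‖ ^ 2 := by
  simp only [Pi.smul_apply, norm_smul, mul_pow, Real.norm_eq_abs, sq_abs, mul_sum]

theorem sum_norm_add_sq_of_disjoint {u v : ι → E} (huv : Disjoint (support u) (support v)) :
    ∑ j, ‖(u + v) j‖ ^ 2 = ∑ j, ‖u j‖ ^ 2 + ∑ j, ‖v j‖ ^ 2 := by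
  rw [← sum_add_distrib]
  refine sum_congr rfl fun j _ => ?_
  by_cases hu : u j = 0
  · simp [hu]
  · simp [Function.notMem_support.1 (Set.disjoint_left.1 huv hu)]

theorem sum_norm_indicator_sq (h : ι → E) (T : Finset ι) :
    ∑ j, ‖Set.indicator (↑T) h j‖ ^ 2 = ∑ j ∈ T, ‖h j‖ ^ 2 :=
  sum_indicator_subset_of_eq_zero h (fun _ x => ‖x‖ ^ 2) (subset_univ T) (by simp)

theorem sum_compl_norm_sub_le [DecidableEq ι] {x z : ι → E} {T : Finset ι} (hxT : ∀ j ∉ T, x j = 0)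
    (hzx : ∑ j, ‖z j‖ ≤ ∑ j, ‖x j‖) : ∑ j ∈ Tᶜ, ‖(z - x) j‖ ≤ ∑ j ∈ T, ‖(z - x) j‖ := by
  have hxc : ∑ j ∈ Tᶜ, ‖x j‖ = 0 :=
    sum_eq_zero fun j hj => by rw [hxT j (mem_compl.1 hj), norm_zero]
  have hzc : ∑ j ∈ Tᶜ, ‖(z - x) j‖ = ∑ j ∈ Tᶜ, ‖z j‖ :=
    sum_congr rfl fun j hj => by simp [hxT j (mem_compl.1 hj)]
  have hT : ∑ j ∈ T, ‖x j‖ - ∑ j ∈ T, ‖z j‖ ≤ ∑ j ∈ T, ‖(z - x) j‖ := by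
    rw [← sum_sub_distrib]
    exact sum_le_sum fun j _ => by rw [Pi.sub_apply, norm_sub_rev]; exact norm_sub_norm_le _ _
  linarith [sum_add_sum_compl T (‖z ·‖), sum_add_sum_compl T (‖x ·‖)]

end BlockVectors

theorem Submodule.indicator_mem_pi {ι E : Type*} [AddCommGroup E] [Module ℝ E]
    {W : ι → Submodule ℝ E} {h : ι → E} (hh : h ∈ Submodule.pi Set.univ W) (T : Set ι) :
    T.indicator h ∈ Submodule.pi Set.univ W :=
  Submodule.mem_pi.2 fun j _ => by
    by_cases hj : j ∈ T
    · simpa [hj] using Submodule.mem_pi.1 hh j trivial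
    · simp [hj]

theorem Finpartition.sum_indicator_parts {ι M : Type*} [DecidableEq ι] [AddCommMonoid M]
    {S : Finset ι} (P : Finpartition S) (f : ι → M) :
    ∑ B ∈ P.parts, Set.indicator (↑B) f = Set.indicator (↑S) f := by
  funext j
  rw [Finset.sum_apply, ← indicator_biUnion_apply P.parts (fun B => (B : Set ι))
    fun B hB B' hB' hne => disjoint_coe.2 (P.disjoint hB hB' hne)]
  congr 2
  simpa using congrArg ((↑) : Finset ι → Set ι) P.biUnion_parts

def HasBlockRIP {ι E F : Type*} [Fintype ι] [NormedAddCommGroup E] [NormedSpace ℝ E]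
    [NormedAddCommGroup F] [NormedSpace ℝ F] (W : ι → Submodule ℝ E) (Φ : (ι → E) →ₗ[ℝ] F)
    (t : ℕ) (θ : ℝ) : Prop :=
  ∀ x ∈ Submodule.pi Set.univ W, (support x).ncard ≤ t →
    (1 - θ) * ∑ j, ‖x j‖ ^ 2 ≤ ‖Φ x‖ ^ 2 ∧ ‖Φ x‖ ^ 2 ≤ (1 + θ) * ∑ j, ‖x j‖ ^ 2

namespace HasBlockRIP

variable {ι E F : Type*} [Fintype ι] [NormedAddCommGroup E] [NormedSpace ℝ E]
  [NormedAddCommGroup F] [InnerProductSpace ℝ F]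
  {W : ι → Submodule ℝ E} {Φ : (ι → E) →ₗ[ℝ] F} {t s : ℕ} {θ : ℝ}

theorem abs_inner_le (hΦ : HasBlockRIP W Φ t θ) {u v : ι → E}
    (hu : u ∈ Submodule.pi Set.univ W) (hv : v ∈ Submodule.pi Set.univ W)
    (huv : Disjoint (support u) (support v)) (hcard : (support u ∪ support v).ncard ≤ t) :
    |⟪Φ u, Φ v⟫_ℝ| ≤ θ / 2 * (∑ j, ‖u j‖ ^ 2 + ∑ j, ‖v j‖ ^ 2) := by
  have hcard' {w : ι → E} (hw : support w ⊆ support u ∪ support v) : (support w).ncard ≤ t :=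
    (Set.ncard_le_ncard hw (Set.toFinite _)).trans hcard
  have hadd := hΦ (u + v) (add_mem hu hv) (hcard' (Function.support_add u v))
  have hsub := hΦ (u + -v) (add_mem hu (neg_mem hv))
    (hcard' (by rw [← sub_eq_add_neg]; exact Function.support_sub u v))
  rw [sum_norm_add_sq_of_disjoint huv, map_add, norm_add_sq_real] at hadd
  rw [sum_norm_add_sq_of_disjoint (by rwa [Function.support_neg]), map_add, map_neg,
    norm_add_sq_real, inner_neg_right, norm_neg] at hsub
  simp only [Pi.neg_apply, norm_neg] at hsub
  rw [abs_le]
  constructor <;> nlinarith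

theorem abs_inner_indicator_le [DecidableEq ι] (hΦ : HasBlockRIP W Φ t θ) {h : ι → E}
    (hh : h ∈ Submodule.pi Set.univ W) {T T' : Finset ι} (hTT' : Disjoint T T')
    (hcard : #T + #T' ≤ t) :
    |⟪Φ (Set.indicator ↑T h), Φ (Set.indicator ↑T' h)⟫_ℝ| ≤
      θ * √(∑ j ∈ T, ‖h j‖ ^ 2) * √(∑ j ∈ T', ‖h j‖ ^ 2) := by
  set u := Set.indicator (↑T) h
  set v := Set.indicator (↑T') h
  have hu : ∑ j, ‖u j‖ ^ 2 = √(∑ j ∈ T, ‖h j‖ ^ 2) ^ 2 := by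
    rw [sum_norm_indicator_sq, Real.sq_sqrt (sum_nonneg fun j _ => sq_nonneg _)]
  have hv : ∑ j, ‖v j‖ ^ 2 = √(∑ j ∈ T', ‖h j‖ ^ 2) ^ 2 := by
    rw [sum_norm_indicator_sq, Real.sq_sqrt (sum_nonneg fun j _ => sq_nonneg _)]
  set p := √(∑ j ∈ T, ‖h j‖ ^ 2)
  set q := √(∑ j ∈ T', ‖h j‖ ^ 2)
  have hp0 : 0 ≤ p := Real.sqrt_nonneg _
  have hq0 : 0 ≤ q := Real.sqrt_nonneg _
  rcases hp0.eq_or_lt with hp | hp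
  · rw [← hp, sq, zero_mul, sum_norm_sq_eq_zero_iff] at hu
    simp [hu, ← hp]
  rcases hq0.eq_or_lt with hq | hq
  · rw [← hq, sq, zero_mul, sum_norm_sq_eq_zero_iff] at hv
    simp [hv, ← hq]
  -- After rescaling, `q • u` and `p • v` have the same squared norm `p² q²`.
  have hsu : support (q • u) ⊆ ↑T :=
    (Function.support_const_smul_subset _ _).trans Set.support_indicator_subset
  have hsv : support (p • v) ⊆ ↑T' :=
    (Function.support_const_smul_subset _ _).trans Set.support_indicator_subset
  have hsupp : support (q • u) ∪ support (p • v) ⊆ ↑(T ∪ T') := by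
    rw [coe_union]; exact Set.union_subset_union hsu hsv
  have key := hΦ.abs_inner_le (Submodule.smul_mem _ q (Submodule.indicator_mem_pi hh _))
    (Submodule.smul_mem _ p (Submodule.indicator_mem_pi hh _))
    ((Finset.disjoint_coe.2 hTT').mono hsu hsv)
    ((Set.ncard_le_ncard hsupp (Finset.finite_toSet _)).trans
      (by rw [Set.ncard_coe_finset]; exact (card_union_le _ _).trans hcard))
  rw [map_smul, map_smul, real_inner_smul_left, real_inner_smul_right, sum_norm_smul_sq,
    sum_norm_smul_sq, hu, hv, abs_mul, abs_mul, abs_of_pos hp, abs_of_pos hq] at key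
  refine le_of_mul_le_mul_left (a := q * p) ?_ (mul_pos hq hp)
  nlinarith

theorem one_sub_mul_sum_sq_le [DecidableEq ι] (hΦ : HasBlockRIP W Φ (2 * s) θ) {h : ι → E}
    (hh : h ∈ Submodule.pi Set.univ W) (hΦh : Φ h = 0) {T₀ T₁ : Finset ι}
    (hT : Disjoint T₀ T₁) (hT₀ : #T₀ ≤ s) (hT₁ : #T₁ ≤ s) (P : Finpartition (T₀ ∪ T₁)ᶜ)
    (hP : ∀ B ∈ P.parts, #B ≤ s) :
    (1 - θ) * (∑ j ∈ T₀, ‖h j‖ ^ 2 + ∑ j ∈ T₁, ‖h j‖ ^ 2) ≤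
      θ * (√(∑ j ∈ T₀, ‖h j‖ ^ 2) + √(∑ j ∈ T₁, ‖h j‖ ^ 2)) *
        ∑ B ∈ P.parts, √(∑ j ∈ B, ‖h j‖ ^ 2) := by
  set u := Set.indicator (↑T₀) h + Set.indicator (↑T₁) h
  have hu : u + ∑ B ∈ P.parts, Set.indicator (↑B) h = h := by
    have : u = Set.indicator ↑(T₀ ∪ T₁) h := by
      rw [coe_union, Set.indicator_union_of_disjoint (disjoint_coe.2 hT)]; rfl
    rw [this, P.sum_indicator_parts, coe_compl]
    exact Set.indicator_self_add_compl _ _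
  have hΦu : Φ u = -∑ B ∈ P.parts, Φ (Set.indicator (↑B) h) := by
    rw [eq_neg_iff_add_eq_zero, ← map_sum, ← map_add, hu, hΦh]
  have hlow : (1 - θ) * (∑ j ∈ T₀, ‖h j‖ ^ 2 + ∑ j ∈ T₁, ‖h j‖ ^ 2) ≤ ‖Φ u‖ ^ 2 := by
    have hsupp : support u ⊆ ↑(T₀ ∪ T₁) := (Function.support_add _ _).trans <| by
      rw [coe_union]
      exact Set.union_subset_union Set.support_indicator_subset Set.support_indicator_subset
    have hcard : (support u).ncard ≤ 2 * s :=
      (Set.ncard_le_ncard hsupp (finite_toSet _)).trans <| by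
        rw [Set.ncard_coe_finset]; exact (card_union_le _ _).trans (by omega)
    have := (hΦ u (add_mem (Submodule.indicator_mem_pi hh _)
      (Submodule.indicator_mem_pi hh _)) hcard).1
    rwa [sum_norm_add_sq_of_disjoint ((disjoint_coe.2 hT).mono Set.support_indicator_subset
      Set.support_indicator_subset), sum_norm_indicator_sq, sum_norm_indicator_sq] at this
  have hcross : ∀ B ∈ P.parts, -⟪Φ u, Φ (Set.indicator (↑B) h)⟫_ℝ ≤
      θ * (√(∑ j ∈ T₀, ‖h j‖ ^ 2) + √(∑ j ∈ T₁, ‖h j‖ ^ 2)) * √(∑ j ∈ B, ‖h j‖ ^ 2) := by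
    intro B hB
    have hBc : Disjoint (T₀ ∪ T₁) B := disjoint_compl_right.mono_right (P.le hB)
    have c₀ := hΦ.abs_inner_indicator_le hh (disjoint_union_left.1 hBc).1
      (by have := hP B hB; omega)
    have c₁ := hΦ.abs_inner_indicator_le hh (disjoint_union_left.1 hBc).2
      (by have := hP B hB; omega)
    rw [map_add, inner_add_left]
    linarith [neg_abs_le ⟪Φ (Set.indicator (↑T₀) h), Φ (Set.indicator (↑B) h)⟫_ℝ,
      neg_abs_le ⟪Φ (Set.indicator (↑T₁) h), Φ (Set.indicator (↑B) h)⟫_ℝ]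
  calc (1 - θ) * (∑ j ∈ T₀, ‖h j‖ ^ 2 + ∑ j ∈ T₁, ‖h j‖ ^ 2) ≤ ‖Φ u‖ ^ 2 := hlow
    _ = ∑ B ∈ P.parts, -⟪Φ u, Φ (Set.indicator (↑B) h)⟫_ℝ := by
        rw [← real_inner_self_eq_norm_sq]
        nth_rewrite 2 [hΦu]
        rw [inner_neg_right, inner_sum, sum_neg_distrib]
    _ ≤ _ := (sum_le_sum hcross).trans_eq (mul_sum _ _ _).symm

theorem eq_zero_of_sum_compl_le [DecidableEq ι] (hΦ : HasBlockRIP W Φ (2 * s) θ)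
    (hθ0 : 0 ≤ θ) (hθ : θ < √2 - 1) {h : ι → E} (hh : h ∈ Submodule.pi Set.univ W)
    (hΦh : Φ h = 0) {T : Finset ι} (hT : #T ≤ s)
    (hcone : ∑ j ∈ Tᶜ, ‖h j‖ ≤ ∑ j ∈ T, ‖h j‖) : h = 0 := by
  suffices hT0 : ∑ j ∈ T, ‖h j‖ ≤ 0 by
    have hsum : ∑ j, ‖h j‖ = 0 := by
      rw [← sum_add_sum_compl T]
      linarith [sum_nonneg fun j (_ : j ∈ Tᶜ) => norm_nonneg (h j),
        sum_nonneg fun j (_ : j ∈ T) => norm_nonneg (h j)]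
    funext j
    simpa using (sum_eq_zero_iff_of_nonneg fun j _ => norm_nonneg (h j)).1 hsum j (mem_univ j)
  have hCS : ∑ j ∈ T, ‖h j‖ ≤ √(s : ℝ) * √(∑ j ∈ T, ‖h j‖ ^ 2) :=
    (sum_le_sqrt_card_mul_sqrt_sum_sq T).trans (mul_le_mul_of_nonneg_right
      (Real.sqrt_le_sqrt (by exact_mod_cast hT)) (Real.sqrt_nonneg _))
  rcases s.eq_zero_or_pos with rfl | hs
  · simpa using hCS
  obtain ⟨T₁, hT₁, hT₁s, P, hPs, htail⟩ :=
    exists_finpartition_sqrt_mul_sum_le (‖h ·‖) (fun j => norm_nonneg (h j)) hs Tᶜ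
  have hpart : ∑ B ∈ P.parts, √(∑ j ∈ B, ‖h j‖ ^ 2) ≤ √(∑ j ∈ T, ‖h j‖ ^ 2) :=
    le_of_mul_le_mul_left (htail.trans (hcone.trans hCS))
      (Real.sqrt_pos.2 (by exact_mod_cast hs))
  have key := hΦ.one_sub_mul_sum_sq_le hh hΦh (disjoint_compl_right.mono_right hT₁) hT hT₁s
    (P.copy (by rw [compl_union, sdiff_eq_inter_compl])) hPs
  have hzero := eq_zero_of_one_sub_mul_sq_add_sq_le (Real.sqrt_nonneg _)
    (Real.sqrt_nonneg (∑ j ∈ T₁, ‖h j‖ ^ 2)) hθ0 hθ hpart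
    (by rwa [Real.sq_sqrt (sum_nonneg fun j _ => sq_nonneg _),
      Real.sq_sqrt (sum_nonneg fun j _ => sq_nonneg _)])
  simpa [hzero] using hCS

theorem sum_norm_lt (hΦ : HasBlockRIP W Φ (2 * s) θ) (hθ0 : 0 ≤ θ) (hθ : θ < √2 - 1)
    {x z : ι → E} (hx : x ∈ Submodule.pi Set.univ W) (hxs : (support x).ncard ≤ s)
    (hz : z ∈ Submodule.pi Set.univ W) (hzx : Φ z = Φ x) (hne : z ≠ x) :
    ∑ j, ‖x j‖ < ∑ j, ‖z j‖ := by
  classical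
  by_contra! hle
  set T := (support x).toFinite.toFinset
  have hT : #T ≤ s := by rwa [← Set.ncard_eq_toFinset_card]
  have hxT : ∀ j ∉ T, x j = 0 := fun j hj => by simpa [T] using hj
  exact hne (sub_eq_zero.1 (hΦ.eq_zero_of_sum_compl_le hθ0 hθ (sub_mem hz hx)
    (by rw [map_sub, hzx, sub_self]) hT (sum_compl_norm_sub_le hxT hle)))

end HasBlockRIP

theorem stmt_19_general (m' d N s : ℕ)
    (W : Fin N → Submodule ℝ (EuclideanSpace ℝ (Fin d)))
    (Φ : (Fin N → EuclideanSpace ℝ (Fin d)) →ₗ[ℝ] (Fin m' → ℝ))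
    (θ : ℝ) (hθ0 : 0 ≤ θ) (hθ : θ < Real.sqrt 2 - 1)
    (hRIP : ∀ x : Fin N → EuclideanSpace ℝ (Fin d), (∀ j, x j ∈ W j) →
      {j | x j ≠ 0}.ncard ≤ 2 * s →
      (1 - θ) * ∑ j, ‖x j‖ ^ 2 ≤ ∑ i, (Φ x i) ^ 2 ∧
      ∑ i, (Φ x i) ^ 2 ≤ (1 + θ) * ∑ j, ‖x j‖ ^ 2) :
    ∀ x : Fin N → EuclideanSpace ℝ (Fin d), (∀ j, x j ∈ W j) →
      {j | x j ≠ 0}.ncard ≤ s →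
      ∀ z : Fin N → EuclideanSpace ℝ (Fin d), (∀ j, z j ∈ W j) →
        Φ z = Φ x → z ≠ x → ∑ j, ‖x j‖ < ∑ j, ‖z j‖ := by
  intro x hx hxs z hz hzx hne
  let Ψ := (WithLp.linearEquiv 2 ℝ (Fin m' → ℝ)).symm.toLinearMap ∘ₗ Φ
  have hΨ : HasBlockRIP W Ψ (2 * s) θ := fun y hy hys => by
    have hnorm : ‖Ψ y‖ ^ 2 = ∑ i, (Φ y i) ^ 2 := by simp [Ψ, EuclideanSpace.norm_sq_eq]
    rw [hnorm]
    exact hRIP y (fun j => Submodule.mem_pi.1 hy j trivial) hys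
  exact hΨ.sum_norm_lt hθ0 hθ (Submodule.mem_pi.2 fun j _ => hx j) hxs
    (Submodule.mem_pi.2 fun j _ => hz j) (by simp [Ψ, hzx]) hne

/-- RIP-based exact recovery for mixed ℓ₁/ℓ₂-minimization: if `Φ` satisfies the
restricted isometry property on `2s`-block-sparse vectors of
`ℋ = {x : xⱼ ∈ Wⱼ}` with constant `θ < √2 − 1`, then every `s`-block-sparse `x ∈ ℋ`
is the unique minimizer of `‖z‖_{2,1} = ∑_j ‖zⱼ‖₂` subject to `z ∈ ℋ` and `Φz = Φx`. -/
theorem stmt_19 (m' d N k s : ℕ)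
    (W : Fin N → Submodule ℝ (EuclideanSpace ℝ (Fin d)))
    (hk : ∀ j, Module.finrank ℝ (W j) = k)
    (Φ : (Fin N → EuclideanSpace ℝ (Fin d)) →ₗ[ℝ] (Fin m' → ℝ))
    (θ : ℝ) (hθ0 : 0 ≤ θ) (hθ : θ < Real.sqrt 2 - 1)
    (hRIP : ∀ x : Fin N → EuclideanSpace ℝ (Fin d), (∀ j, x j ∈ W j) →
      {j | x j ≠ 0}.ncard ≤ 2 * s →
      (1 - θ) * ∑ j, ‖x j‖ ^ 2 ≤ ∑ i, (Φ x i) ^ 2 ∧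
      ∑ i, (Φ x i) ^ 2 ≤ (1 + θ) * ∑ j, ‖x j‖ ^ 2) :
    ∀ x : Fin N → EuclideanSpace ℝ (Fin d), (∀ j, x j ∈ W j) →
      {j | x j ≠ 0}.ncard ≤ s →
      ∀ z : Fin N → EuclideanSpace ℝ (Fin d), (∀ j, z j ∈ W j) →
        Φ z = Φ x → z ≠ x → ∑ j, ‖x j‖ < ∑ j, ‖z j‖ :=
  stmt_19_general m' d N s W Φ θ hθ0 hθ hRIP
end
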